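/- arXiv:2506.02984 — 4 statements merged into one kernel-verified Lean document; each statement's English description precedes it below -/
import Mathlib

section
/- Let K_0 ⊇ K_1 ⊇ K_2 ⊇ ⋯ be a descending chain of simplexes contained in the standard n-dimensional simplex Δ ⊂ ℝ^{n+1} (each K_t being the convex hull of a finite affinely independent set of points of Δ). Then the intersection K = ∩_{t≥0} K_t is itself a simplex, i.e., the convex hull of a finite affinely independent set of points. -/
open Matrix

abbrev MatZ (n : ℕ) : Type := Matrix (Fin (n + 1)) (Fin (n + 1)) ℤ

def inSigma {n : ℕ} (A : MatZ n) : Prop :=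
  IsUnit A.det ∧ ∀ i j, 0 ≤ A i j

def IsPermMat {n : ℕ} (A : MatZ n) : Prop :=
  ∃ σ : Equiv.Perm (Fin (n + 1)), ∀ i j, A i j = if i = σ j then 1 else 0

noncomputable def toR {n : ℕ} (A : MatZ n) : Matrix (Fin (n + 1)) (Fin (n + 1)) ℝ :=
  A.map ((↑) : ℤ → ℝ)

noncomputable def projAct {n : ℕ} (A : Matrix (Fin (n + 1)) (Fin (n + 1)) ℝ)
    (x : Fin (n + 1) → ℝ) : Fin (n + 1) → ℝ :=
  (∑ i, (A *ᵥ x) i)⁻¹ • (A *ᵥ x)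

noncomputable def simg {n : ℕ} (A : MatZ n) : Set (Fin (n + 1) → ℝ) :=
  projAct (toR A) '' stdSimplex ℝ (Fin (n + 1))

def wordProd {n : ℕ} (A0 A1 : MatZ n) (w : List Bool) : MatZ n :=
  (w.map (fun b => bif b then A1 else A0)).prod

def Contractive {n : ℕ} (A0 A1 : MatZ n) : Prop :=
  ∀ a : ℕ → Bool, ∃ p,
    (⋂ t : ℕ, simg (wordProd A0 A1 ((List.range t).map a))) = {p}

def Nmat (n : ℕ) : MatZ n :=
  Matrix.of fun i j => if i = j then 1 else if j = 1 ∧ i = 0 then 1 else 0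

def Fmat (n : ℕ) : MatZ n :=
  Matrix.of fun i j => if i = Equiv.swap (0 : Fin (n + 1)) 1 j then 1 else 0

def Rmat (n : ℕ) : MatZ n :=
  Matrix.of fun i j => if i = j + 1 then 1 else 0

def Lmat (n : ℕ) : MatZ n := Fmat n * Nmat n * Fmat n

def Mon0 (n : ℕ) : MatZ n := Nmat n * Fmat n * Rmat n

def Mon1 (n : ℕ) : MatZ n := Lmat n * Rmat n

def permMat {n : ℕ} (σ : Equiv.Perm (Fin (n + 1))) : MatZ n :=
  Matrix.of fun i j => if i = σ j then 1 else 0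

def IsSimplex {n : ℕ} (S : Set (Fin (n + 1) → ℝ)) : Prop :=
  ∃ V : Finset (Fin (n + 1) → ℝ),
    AffineIndependent ℝ (fun v : V => (v : Fin (n + 1) → ℝ)) ∧
    S = convexHull ℝ (V : Set (Fin (n + 1) → ℝ))

/-! Along an ultrafilter on `ℕ` the simplices `K t` eventually have a fixed number of vertices, and
inside the compact `K 0` their vertex families converge to a family `w`; the intersection is then
`convexHull (range w)`, which by Krein–Milman is the convex hull of its extreme points. These are
affinely independent: the barycentric coordinates of an extreme point `p` with respect to the
vertices of `K t` converge to coordinates supported on the indices `i` with `w i = p`, while an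
affine relation among extreme points becomes, at each stage, a relation among the affinely
independent vertices of `K t`; so it survives in the limit coordinates, where it forces all
weights to vanish. -/

open Set Filter Topology

section Barycentric

variable {ι E : Type*} [Fintype ι] [AddCommGroup E]

theorem AffineIndependent.sum_mul_eq_zero {k : Type*} [Ring k] [Module k E] {v : ι → E}
    (hv : AffineIndependent k v) {κ : Type*} {u : κ → E} {M : κ → ι → k}
    (hM : ∀ j, ∑ i, M j i = 1) (hMv : ∀ j, ∑ i, M j i • v i = u j) {s : Finset κ} {c : κ → k}
    (hc : ∑ j ∈ s, c j = 0) (hcu : ∑ j ∈ s, c j • u j = 0) (i : ι) :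
    ∑ j ∈ s, c j * M j i = 0 := by
  refine hv.eq_zero_of_sum_eq_zero (s := Finset.univ) (w := fun i => ∑ j ∈ s, c j * M j i)
    ?_ ?_ i (Finset.mem_univ i)
  · rw [Finset.sum_comm]
    simp [← Finset.mul_sum, hM, hc]
  · simp_rw [Finset.sum_smul, mul_smul]
    rw [Finset.sum_comm]
    simp [← Finset.smul_sum, hMv, hcu]

variable [Module ℝ E]

theorem convexHull_range_eq_image_stdSimplex (v : ι → E) :
    convexHull ℝ (range v) = (fun μ : ι → ℝ => ∑ i, μ i • v i) '' stdSimplex ℝ ι := by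
  classical
  have hL : (fun μ : ι → ℝ => ∑ i, μ i • v i) = Fintype.linearCombination ℝ v :=
    funext fun μ => (Fintype.linearCombination_apply ℝ v μ).symm
  rw [hL, ← convexHull_rangle_single_eq_stdSimplex, LinearMap.image_convexHull, ← range_comp]
  congr 2
  ext i
  simp [Fintype.linearCombination_apply, Pi.single_apply]

theorem eq_of_mem_extremePoints_of_sum_smul_eq {A : Set E} (hA : Convex ℝ A) {p : E}
    (hp : p ∈ A.extremePoints ℝ) {μ : ι → ℝ} (hμ : μ ∈ stdSimplex ℝ ι) {y : ι → E}
    (hy : ∀ i, y i ∈ A) (hsum : ∑ i, μ i • y i = p) {i : ι} (hi : μ i ≠ 0) : y i = p := by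
  classical
  by_contra hyi
  set S := Finset.univ.filter fun j => y j ≠ p with hSdef
  have hpos : 0 < ∑ j ∈ S, μ j :=
    Finset.sum_pos' (fun j _ => hμ.1 j) ⟨i, by simp [S, hyi], (hμ.1 i).lt_of_ne' hi⟩
  have hmem : S.centerMass μ y ∈ A \ {p} :=
    (hA.mem_extremePoints_iff_convex_sdiff.1 hp).2.centerMass_mem (fun j _ => hμ.1 j) hpos
      fun j hj => ⟨hy j, (Finset.mem_filter.1 hj).2⟩
  -- off `S` the summands `μ j • (y j - p)` vanish, and over all `j` they sum to `p - p`
  have hS : ∑ j ∈ S, μ j • (y j - p) = 0 := by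
    rw [hSdef, Finset.sum_filter_of_ne (p := fun j => y j ≠ p)
      fun j _ h hj => h (by rw [hj, sub_self, smul_zero])]
    simp [smul_sub, Finset.sum_sub_distrib, hsum, ← Finset.sum_smul, hμ.2]
  refine hmem.2 ?_
  rw [mem_singleton_iff, Finset.centerMass, inv_smul_eq_iff₀ hpos.ne', Finset.sum_smul]
  simpa [smul_sub, Finset.sum_sub_distrib, sub_eq_zero] using hS

end Barycentric

section Limits

variable {α ι E : Type*} [Fintype ι] [AddCommGroup E] [Module ℝ E] [TopologicalSpace E]
  [IsTopologicalAddGroup E] [ContinuousSMul ℝ E] [T2Space E]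

theorem exists_tendsto_barycentric {𝒰 : Ultrafilter α} {v : α → ι → E} {w : ι → E}
    (hv : Tendsto v 𝒰 (𝓝 w)) {x : E} (hx : ∀ᶠ a in 𝒰, x ∈ convexHull ℝ (range (v a))) :
    ∃ μ : α → ι → ℝ, ∃ ν ∈ stdSimplex ℝ ι, Tendsto μ 𝒰 (𝓝 ν) ∧ ∑ i, ν i • w i = x ∧
      ∀ᶠ a in 𝒰, ∑ i, μ a i = 1 ∧ ∑ i, μ a i • v a i = x := by
  have hcoord : ∀ a, ∃ μ : ι → ℝ, x ∈ convexHull ℝ (range (v a)) →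
      μ ∈ stdSimplex ℝ ι ∧ ∑ i, μ i • v a i = x := fun a => by
    by_cases ha : x ∈ convexHull ℝ (range (v a))
    · rw [convexHull_range_eq_image_stdSimplex] at ha
      obtain ⟨μ, hμ, hμx⟩ := ha
      exact ⟨μ, fun _ => ⟨hμ, hμx⟩⟩
    · exact ⟨0, fun h => absurd h ha⟩
  choose μ hμ using hcoord
  have hμ' := hx.mono fun a ha => hμ a ha
  obtain ⟨ν, hν, hμν⟩ := (isCompact_stdSimplex ℝ ι).ultrafilter_le_nhds (𝒰.map μ)
    (by rw [Ultrafilter.coe_map, le_principal_iff]; exact hμ'.mono fun a ha => ha.1)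
  replace hμν : Tendsto μ 𝒰 (𝓝 ν) := by rwa [Ultrafilter.coe_map] at hμν
  have hlim : Tendsto (fun a => ∑ i, μ a i • v a i) 𝒰 (𝓝 (∑ i, ν i • w i)) :=
    ((by fun_prop : Continuous fun p : (ι → ℝ) × (ι → E) => ∑ i, p.1 i • p.2 i).tendsto _).comp
      (hμν.prodMk_nhds hv)
  refine ⟨μ, ν, hν, hμν, tendsto_nhds_unique hlim ?_, hμ'.mono fun a ha => ⟨ha.1.2, ha.2⟩⟩
  exact tendsto_const_nhds.congr' (hμ'.mono fun a ha => ha.2.symm)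

theorem affineIndependent_of_mem_extremePoints_of_tendsto {𝒰 : Ultrafilter α} {v : α → ι → E}
    {w : ι → E} (hv : Tendsto v 𝒰 (𝓝 w)) (hvi : ∀ᶠ a in 𝒰, AffineIndependent ℝ (v a)) {κ : Type*}
    [Finite κ] {u : κ → E} (hu : Function.Injective u)
    (hmem : ∀ j, ∀ᶠ a in 𝒰, u j ∈ convexHull ℝ (range (v a)))
    (hext : ∀ j, u j ∈ (convexHull ℝ (range w)).extremePoints ℝ) :
    AffineIndependent ℝ u := by
  choose μ ν hν hμν hνw hμ using fun j => exists_tendsto_barycentric hv (hmem j)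
  have hsupp : ∀ j i, ν j i ≠ 0 → w i = u j := fun j i =>
    eq_of_mem_extremePoints_of_sum_smul_eq (convex_convexHull ℝ _) (hext j) (hν j)
      (fun i => subset_convexHull ℝ _ (mem_range_self i)) (hνw j)
  rw [affineIndependent_iff]
  intro s d hd hdu j₀ hj₀
  -- at each stage the relation `d` among the `u j` is one among the `v a i`, hence trivial
  have hrel : ∀ i, ∑ j ∈ s, d j * ν j i = 0 := fun i => by
    refine tendsto_nhds_unique (tendsto_finsetSum _ fun j _ =>
      ((continuous_apply i).tendsto _ |>.comp (hμν j)).const_mul (d j)) ?_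
    refine tendsto_const_nhds.congr' ?_
    filter_upwards [hvi, eventually_all.2 hμ] with a ha hμa
    exact (ha.sum_mul_eq_zero (fun j => (hμa j).1) (fun j => (hμa j).2) hd hdu i).symm
  obtain ⟨i, -, hi⟩ : ∃ i ∈ Finset.univ, ν j₀ i ≠ 0 :=
    Finset.exists_ne_zero_of_sum_ne_zero (by rw [(hν j₀).2]; exact one_ne_zero)
  have hrel_i := hrel i
  rw [Finset.sum_eq_single_of_mem j₀ hj₀ fun j _ hj => by
    rw [not_ne_iff.1 fun h => hj (hu ((hsupp j i h).symm.trans (hsupp j₀ i hi))), mul_zero]]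
    at hrel_i
  exact (mul_eq_zero.1 hrel_i).resolve_right hi

theorem iInter_eq_convexHull_range_of_tendsto {K : ℕ → Set E} (hK : Antitone K)
    (hKc : ∀ t, IsClosed (K t)) (hKconv : ∀ t, Convex ℝ (K t)) {𝒰 : Ultrafilter ℕ}
    (h𝒰 : (𝒰 : Filter ℕ) ≤ atTop) {v : ℕ → ι → E} {w : ι → E} (hv : Tendsto v 𝒰 (𝓝 w))
    (hKv : ∀ᶠ t in 𝒰, K t = convexHull ℝ (range (v t))) :
    ⋂ t, K t = convexHull ℝ (range w) := by
  refine Subset.antisymm (fun x hx => ?_) (convexHull_min ?_ (convex_iInter hKconv))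
  · obtain ⟨-, ν, hν, -, hνx, -⟩ :=
      exists_tendsto_barycentric hv (hKv.mono fun t ht => ht ▸ mem_iInter.1 hx t)
    rw [convexHull_range_eq_image_stdSimplex]
    exact ⟨ν, hν, hνx⟩
  · rintro _ ⟨i, rfl⟩
    refine mem_iInter.2 fun s =>
      (hKc s).mem_of_tendsto ((continuous_apply i).tendsto _ |>.comp hv) ?_
    filter_upwards [hKv, h𝒰 (eventually_ge_atTop s)] with t ht hst
    exact hK hst (ht ▸ subset_convexHull ℝ _ (mem_range_self i))

end Limits

theorem Set.Finite.convexHull_extremePoints_convexHull {E : Type*} [AddCommGroup E]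
    [Module ℝ E] [TopologicalSpace E] [T2Space E] [IsTopologicalAddGroup E] [ContinuousSMul ℝ E]
    [LocallyConvexSpace ℝ E] {s : Set E} (hs : s.Finite) :
    convexHull ℝ ((convexHull ℝ s).extremePoints ℝ) = convexHull ℝ s := by
  have hclosed := (hs.subset (extremePoints_convexHull_subset (𝕜 := ℝ))).isClosed_convexHull ℝ
  rw [← hclosed.closure_eq]
  exact closure_convexHull_extremePoints (hs.isCompact_convexHull ℝ) (convex_convexHull ℝ s)

theorem Ultrafilter.exists_eventually_affineIndependent_range_eq {α E : Type*}
    [AddCommGroup E] [Module ℝ E] [FiniteDimensional ℝ E] (𝒰 : Ultrafilter α)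
    {V : α → Finset E} (hV : ∀ a, AffineIndependent ℝ ((↑) : V a → E)) :
    ∃ m, ∃ v : α → Fin m → E, ∀ᶠ a in 𝒰, AffineIndependent ℝ (v a) ∧ range (v a) = V a := by
  have hcard : ∀ a, (V a).card ∈ Iic (Module.finrank ℝ E + 1) := fun a => by
    have := (hV a).card_le_finrank_succ
    rw [Fintype.card_coe] at this
    exact this.trans (Nat.add_le_add_right (Submodule.finrank_le _) 1)
  obtain ⟨m, -, hm⟩ := (𝒰.eventually_exists_mem_iff (P := fun m a => (V a).card = m)
    (finite_Iic _)).1 (Eventually.of_forall fun a => ⟨_, hcard a, rfl⟩)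
  have henum : ∀ a, ∃ f : Fin m → E, (V a).card = m →
      AffineIndependent ℝ f ∧ range f = V a := fun a => by
    by_cases ha : (V a).card = m
    · let e := ((V a).equivFinOfCardEq ha).symm
      refine ⟨(↑) ∘ e, fun _ => ⟨(hV a).comp_embedding e.toEmbedding, ?_⟩⟩
      rw [range_comp, e.range_eq_univ, image_univ, Subtype.range_coe_subtype]
      rfl
    · exact ⟨0, fun h => absurd h ha⟩
  choose v hv using henum
  exact ⟨m, v, hm.mono fun a ha => hv a ha⟩

theorem exists_affineIndependent_iInter_eq_convexHull {E : Type*} [AddCommGroup E] [Module ℝ E]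
    [TopologicalSpace E] [IsTopologicalAddGroup E] [ContinuousSMul ℝ E] [T2Space E]
    [LocallyConvexSpace ℝ E] [FiniteDimensional ℝ E] {K : ℕ → Set E} (hK : Antitone K)
    (hsimp : ∀ t, ∃ V : Finset E, AffineIndependent ℝ ((↑) : V → E) ∧ K t = convexHull ℝ ↑V) :
    ∃ V : Finset E, AffineIndependent ℝ ((↑) : V → E) ∧ ⋂ t, K t = convexHull ℝ ↑V := by
  choose V hV hKV using hsimp
  let 𝒰 := Ultrafilter.of (atTop : Filter ℕ)
  obtain ⟨m, v, hv⟩ := 𝒰.exists_eventually_affineIndependent_range_eq hV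
  have hKv : ∀ᶠ t in 𝒰, K t = convexHull ℝ (range (v t)) :=
    hv.mono fun t ht => by rw [hKV, ht.2]
  have hvK₀ : ∀ᶠ t in 𝒰, v t ∈ univ.pi fun _ => K 0 := hKv.mono fun t ht i _ =>
    hK (Nat.zero_le t) (ht ▸ subset_convexHull ℝ _ (mem_range_self i))
  obtain ⟨w, -, hw⟩ := (isCompact_univ_pi fun _ : Fin m =>
    hKV 0 ▸ (V 0).finite_toSet.isCompact_convexHull ℝ).ultrafilter_le_nhds (𝒰.map v)
    (by rw [Ultrafilter.coe_map, le_principal_iff]; exact hvK₀)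
  replace hw : Tendsto v 𝒰 (𝓝 w) := by rwa [Ultrafilter.coe_map] at hw
  have hInter : ⋂ t, K t = convexHull ℝ (range w) :=
    iInter_eq_convexHull_range_of_tendsto hK
      (fun t => hKV t ▸ (V t).finite_toSet.isClosed_convexHull ℝ)
      (fun t => hKV t ▸ convex_convexHull ℝ _) (Ultrafilter.of_le _) hw hKv
  have hfin : ((convexHull ℝ (range w)).extremePoints ℝ).Finite :=
    (finite_range w).subset extremePoints_convexHull_subset
  refine ⟨hfin.toFinset, affineIndependent_of_mem_extremePoints_of_tendsto hw
    (hv.mono fun t ht => ht.1) Subtype.val_injective (fun p => ?_)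
    (fun p => hfin.mem_toFinset.1 p.2), ?_⟩
  · have hp : (p : E) ∈ ⋂ t, K t := by
      rw [hInter]; exact extremePoints_subset (hfin.mem_toFinset.1 p.2)
    exact hKv.mono fun t ht => ht ▸ mem_iInter.1 hp t
  · rw [hInter, hfin.coe_toFinset, (finite_range w).convexHull_extremePoints_convexHull]

theorem stmt0_general (n : ℕ) (K : ℕ → Set (Fin (n + 1) → ℝ))
    (hdesc : ∀ t, K (t + 1) ⊆ K t)
    (hsimp : ∀ t, IsSimplex (K t)) :
    IsSimplex (⋂ t, K t) :=
  exists_affineIndependent_iInter_eq_convexHull (antitone_nat_of_succ_le hdesc) hsimp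

theorem stmt0 (n : ℕ) (hn : 1 ≤ n) (K : ℕ → Set (Fin (n + 1) → ℝ))
    (hdesc : ∀ t, K (t + 1) ⊆ K t)
    (hsub : ∀ t, K t ⊆ stdSimplex ℝ (Fin (n + 1)))
    (hsimp : ∀ t, IsSimplex (K t)) :
    IsSimplex (⋂ t, K t) :=
  stmt0_general n K hdesc hsimp
end

section
/- Let A_1, A_2, A_3, … be a sequence of matrices in Σ such that infinitely many A_t are not permutation matrices, and set K_t = (A_1 A_2 ⋯ A_t)[Δ] (so Δ = K_0 ⊇ K_1 ⊇ K_2 ⊇ ⋯ is a descending chain of unimodular simplexes that is strictly decreasing infinitely often). Then K = ∩_{t≥0} K_t is a simplex of affine dimension strictly less than n; in particular K has n-dimensional Lebesgue measure zero in the hyperplane Σ_i x_i = 1. -/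
open Matrix

/-!
Let `P_t = A_0 ⋯ A_{t-1}`. The cones `C_t` spanned by the columns of `P_t` decrease, and
`K = ⋂ K_t` is the slice `∑ x_i = 1` of `C = ⋂ C_t`. Each `C_t` is simplicial, hence has the
Riesz decomposition property, and a compactness argument passes this property to `C`. In a cone
with Riesz decomposition an extreme point of the base lying below a positive combination of other
extreme points would be a convex combination of them, so the extreme points of `K` are affinely
independent and `K` is a simplex.

For the dimension, if the columns of `W` lie in `K_t` then `|det W|` is at most `(n+1)!` divided
by the product of the column sums of `P_t`; this integer grows at every factor `A_t` that is not
a permutation matrix, so any `n + 1` points of `K` are linearly dependent.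
-/

namespace PointedCone

variable {E F : Type*} [AddCommGroup E] [Module ℝ E] [AddCommGroup F] [Module ℝ F]

def HasRieszDecomposition (C : PointedCone ℝ E) : Prop :=
  ∀ y₁ ∈ C, ∀ y₂ ∈ C, ∀ z ∈ C, y₁ + y₂ - z ∈ C →
    ∃ c ∈ C, y₁ - c ∈ C ∧ z - c ∈ C ∧ y₂ - (z - c) ∈ C

lemma hasRieszDecomposition_positive {G : Type*} [AddCommGroup G] [Lattice G]
    [IsOrderedAddMonoid G] [Module ℝ G] [PosSMulMono ℝ G] :
    (positive ℝ G).HasRieszDecomposition := by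
  intro y₁ hy₁ y₂ hy₂ z hz hyz
  simp only [mem_positive, sub_nonneg] at *
  refine ⟨z ⊓ y₁, le_inf hz hy₁, inf_le_right, inf_le_left, ?_⟩
  rw [sub_le_comm]
  exact le_inf (sub_le_self _ hy₂) (sub_le_iff_le_add.2 hyz)

lemma HasRieszDecomposition.comap {C : PointedCone ℝ F} (hC : C.HasRieszDecomposition)
    {g : E →ₗ[ℝ] F} (hg : Function.Surjective g) : (C.comap g).HasRieszDecomposition := by
  intro y₁ hy₁ y₂ hy₂ z hz hyz
  simp only [mem_comap, map_sub, map_add] at *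
  obtain ⟨c', hc', h₁, h₂, h₃⟩ := hC _ hy₁ _ hy₂ _ hz hyz
  obtain ⟨c, rfl⟩ := hg c'
  exact ⟨c, hc', h₁, h₂, h₃⟩

lemma HasRieszDecomposition.exists_sum_eq {C : PointedCone ℝ E} (hC : C.HasRieszDecomposition)
    (hsal : (C : ConvexCone ℝ E).Salient) {ι : Type*} [DecidableEq ι] (s : Finset ι)
    {y : ι → E} (hy : ∀ i ∈ s, y i ∈ C) {z : E} (hz : z ∈ C) (hzy : ∑ i ∈ s, y i - z ∈ C) :
    ∃ c : ι → E, (∀ i ∈ s, c i ∈ C ∧ y i - c i ∈ C) ∧ ∑ i ∈ s, c i = z := by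
  induction s using Finset.induction_on generalizing z with
  | empty =>
    refine ⟨0, by simp, ?_⟩
    by_contra hne
    exact hsal z hz (Ne.symm (by simpa using hne)) (by simpa using hzy)
  | insert a s ha ih =>
    rw [Finset.sum_insert ha] at hzy
    have hya := hy a (Finset.mem_insert_self a s)
    obtain ⟨ca, hca, hyca, hzca, hrest⟩ :=
      hC _ hya _ (C.sum_mem fun i hi => hy i (Finset.mem_insert_of_mem hi)) _ hz hzy
    obtain ⟨c, hc, hcsum⟩ := ih (fun i hi => hy i (Finset.mem_insert_of_mem hi)) hzca hrest
    refine ⟨Function.update c a ca, fun i hi => ?_, ?_⟩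
    · rcases Finset.mem_insert.1 hi with rfl | hi
      · simpa using ⟨hca, hyca⟩
      · simpa [Function.update_of_ne (ne_of_mem_of_not_mem hi ha)] using hc i hi
    · rw [Finset.sum_insert ha, Finset.sum_update_of_notMem ha, hcsum, Function.update_self]
      abel

end PointedCone

section ExtremePoints

open Set

variable {E : Type*} [AddCommGroup E] [Module ℝ E] {C : PointedCone ℝ E} {f : E →ₗ[ℝ] ℝ}

lemma salient_of_forall_pos (hf : ∀ v ∈ C, v ≠ 0 → 0 < f v) : (C : ConvexCone ℝ E).Salient :=
  fun v hv hv0 hnv => by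
    have h₁ := hf v hv hv0
    have h₂ := hf (-v) hnv (neg_ne_zero.2 hv0)
    rw [map_neg] at h₂
    linarith

lemma convex_cone_inter_hyperplane : Convex ℝ ((C : Set E) ∩ f ⁻¹' {1}) :=
  C.convex.inter ((convex_singleton 1).linear_preimage f)

variable (hf : ∀ v ∈ C, v ≠ 0 → 0 < f v)
include hf

lemma eq_smul_of_mem_extremePoints {v : E} (hv : v ∈ ((C : Set E) ∩ f ⁻¹' {1}).extremePoints ℝ)
    {b : ℝ} (hb : 0 < b) {c : E} (hc : c ∈ C) (hbc : b • v - c ∈ C) :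
    ∃ s : ℝ, 0 ≤ s ∧ c = s • v := by
  have hfv : f v = 1 := hv.1.2
  by_cases hc0 : c = 0
  · exact ⟨0, le_rfl, by simp [hc0]⟩
  by_cases hbc0 : b • v - c = 0
  · exact ⟨b, hb.le, (sub_eq_zero.1 hbc0).symm⟩
  have hfc := hf c hc hc0
  have hfd := hf _ hbc hbc0
  have hsum : f c + f (b • v - c) = b := by simp [hfv]
  have hnorm : ∀ x ∈ C, 0 < f x → (f x)⁻¹ • x ∈ (C : Set E) ∩ f ⁻¹' {1} := fun x hx hpos =>
    ⟨C.smul_mem (inv_nonneg.2 hpos.le) hx, by simp [hpos.ne']⟩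
  have hseg : v ∈ openSegment ℝ ((f c)⁻¹ • c) ((f (b • v - c))⁻¹ • (b • v - c)) := by
    refine ⟨f c / b, f (b • v - c) / b, div_pos hfc hb, div_pos hfd hb, ?_, ?_⟩
    · rw [← add_div, hsum, div_self hb.ne']
    · have hb' : ∀ x : ℝ, 0 < x → x / b * x⁻¹ = b⁻¹ := fun x hx => by field_simp
      rw [smul_smul, smul_smul, hb' _ hfc, hb' _ hfd, ← smul_add, add_sub_cancel,
        inv_smul_smul₀ hb.ne']
  have hcv := hv.2 (hnorm c hc hfc) (hnorm _ hbc hfd) hseg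
  exact ⟨f c, hfc.le, by rw [← hcv, smul_smul, mul_inv_cancel₀ hfc.ne', one_smul]⟩

lemma exists_eq_of_smul_le_sum (hC : C.HasRieszDecomposition) {ι : Type*} [DecidableEq ι]
    {p : ι → E} {T : Finset ι} (hp : ∀ j ∈ T, p j ∈ ((C : Set E) ∩ f ⁻¹' {1}).extremePoints ℝ)
    {v : E} (hv : v ∈ ((C : Set E) ∩ f ⁻¹' {1}).extremePoints ℝ) {a : ℝ} (ha : 0 < a)
    {b : ι → ℝ} (hb : ∀ j ∈ T, 0 ≤ b j) (hle : ∑ j ∈ T, b j • p j - a • v ∈ C) :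
    ∃ j ∈ T, 0 < b j ∧ p j = v := by
  set T' := T.filter (fun j => 0 < b j)
  have hsum : ∑ j ∈ T', b j • p j = ∑ j ∈ T, b j • p j :=
    Finset.sum_filter_of_ne fun j hj hne =>
      (hb j hj).lt_of_ne fun h0 => hne (by rw [← h0, zero_smul])
  have hT' : ∀ j ∈ T', j ∈ T ∧ 0 < b j := fun j hj => Finset.mem_filter.1 hj
  obtain ⟨c, hc, hcsum⟩ := hC.exists_sum_eq (salient_of_forall_pos hf) T'
    (fun j hj => C.smul_mem (hT' j hj).2.le (hp j (hT' j hj).1).1.1)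
    (C.smul_mem ha.le hv.1.1) (by rwa [hsum])
  choose! s hs hcs using fun j hj =>
    eq_smul_of_mem_extremePoints hf (hp j (hT' j hj).1) (hT' j hj).2 (hc j hj).1 (hc j hj).2
  have hav : ∑ j ∈ T', s j • p j = a • v := by
    rw [← hcsum]
    exact Finset.sum_congr rfl fun j hj => (hcs j hj).symm
  have hsa : ∑ j ∈ T', s j = a := by
    have := congrArg f hav
    rwa [map_sum, map_smul, hv.1.2, smul_eq_mul, mul_one,
      Finset.sum_congr rfl fun j hj => by rw [map_smul, (hp j (hT' j hj).1).1.2, smul_eq_mul,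
        mul_one]] at this
  have hvhull : v ∈ convexHull ℝ (p '' T') := by
    have hcm : T'.centerMass s p = v := by
      rw [Finset.centerMass, hav, hsa, inv_smul_smul₀ ha.ne']
    exact hcm ▸ T'.centerMass_mem_convexHull hs (hsa ▸ ha) fun j hj => mem_image_of_mem p hj
  have hsub : convexHull ℝ (p '' T') ⊆ (C : Set E) ∩ f ⁻¹' {1} :=
    convexHull_min (by rintro _ ⟨j, hj, rfl⟩; exact (hp j (hT' j hj).1).1)
      convex_cone_inter_hyperplane
  obtain ⟨j, hj, hjv⟩ := extremePoints_convexHull_subset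
    (inter_extremePoints_subset_extremePoints_of_subset hsub ⟨hvhull, hv⟩)
  exact ⟨j, (hT' j hj).1, (hT' j hj).2, hjv⟩

lemma affineIndependent_of_mem_extremePoints (hC : C.HasRieszDecomposition) {ι : Type*}
    {p : ι → E} (hp_inj : Function.Injective p)
    (hp : ∀ i, p i ∈ ((C : Set E) ∩ f ⁻¹' {1}).extremePoints ℝ) : AffineIndependent ℝ p := by
  classical
  have nonpos : ∀ (t : Finset ι) (w : ι → ℝ), ∑ i ∈ t, w i = 0 → ∑ i ∈ t, w i • p i = 0 →
      ∀ e ∈ t, w e ≤ 0 := by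
    intro t w _ hw e he
    by_contra! hwe
    have hpart : ∑ i ∈ t, (w i)⁻ • p i = ∑ i ∈ t, (w i)⁺ • p i := by
      rw [eq_comm, ← sub_eq_zero, ← Finset.sum_sub_distrib, ← hw]
      exact Finset.sum_congr rfl fun i _ => by rw [← sub_smul, posPart_sub_negPart]
    have hle : ∑ i ∈ t, (w i)⁻ • p i - w e • p e ∈ C := by
      rw [hpart, ← Finset.add_sum_erase t _ he, posPart_eq_self.2 hwe.le, add_sub_cancel_left]
      exact C.sum_mem fun i hi => C.smul_mem (posPart_nonneg _) (hp i).1.1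
    obtain ⟨j, -, hj, hje⟩ := exists_eq_of_smul_le_sum hf hC (fun j _ => hp j) (hp e) hwe
      (fun j _ => negPart_nonneg _) hle
    rw [hp_inj hje, negPart_eq_zero.2 hwe.le] at hj
    exact lt_irrefl 0 hj
  rw [affineIndependent_iff]
  intro t w hw0 hw e he
  refine le_antisymm (nonpos t w hw0 hw e he) (neg_nonpos.1 (nonpos t (-w) ?_ ?_ e he))
  · simp [Finset.sum_neg_distrib, hw0]
  · simp [neg_smul, Finset.sum_neg_distrib, hw]

end ExtremePoints

lemma AffineIndependent.linearIndependent_of_map_eq_one {ι E : Type*} [AddCommGroup E]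
    [Module ℝ E] {p : ι → E} (hp : AffineIndependent ℝ p) {f : E →ₗ[ℝ] ℝ}
    (hf : ∀ i, f (p i) = 1) : LinearIndependent ℝ p := by
  rw [linearIndependent_iff']
  intro s g hg i hi
  refine affineIndependent_iff.1 hp s g ?_ hg i hi
  simpa [map_sum, hf] using congrArg f hg

section ColCone

variable {m : Type*} [Fintype m]

lemma mulVec_nonneg_of_nonneg {M : Matrix m m ℝ} (hM : ∀ i j, 0 ≤ M i j) {u : m → ℝ}
    (hu : 0 ≤ u) : 0 ≤ M *ᵥ u :=
  fun i => Finset.sum_nonneg fun j _ => mul_nonneg (hM i j) (hu j)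

variable [DecidableEq m]

/-- For invertible `P`, the cone spanned by the columns of `P` (`mem_colCone_iff`). It is defined
as a preimage of the orthant so that closedness and Riesz decomposition come for free. -/
noncomputable def colCone (P : Matrix m m ℝ) : PointedCone ℝ (m → ℝ) :=
  (PointedCone.positive ℝ (m → ℝ)).comap (Matrix.toLin' P⁻¹)

variable {P : Matrix m m ℝ}

lemma mem_colCone {v : m → ℝ} : v ∈ colCone P ↔ 0 ≤ P⁻¹ *ᵥ v := Iff.rfl

lemma mem_colCone_iff (hP : IsUnit P.det) {v : m → ℝ} :
    v ∈ colCone P ↔ ∃ u, 0 ≤ u ∧ P *ᵥ u = v := by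
  rw [mem_colCone]
  constructor
  · exact fun h => ⟨_, h, by rw [mulVec_mulVec, mul_nonsing_inv _ hP, one_mulVec]⟩
  · rintro ⟨u, hu, rfl⟩
    rwa [mulVec_mulVec, nonsing_inv_mul _ hP, one_mulVec]

lemma isClosed_colCone (P : Matrix m m ℝ) : IsClosed (colCone P : Set (m → ℝ)) :=
  show IsClosed (Matrix.toLin' P⁻¹ ⁻¹' Set.Ici 0) from
    isClosed_Ici.preimage (LinearMap.continuous_of_finiteDimensional _)

lemma hasRieszDecomposition_colCone (hP : IsUnit P.det) : (colCone P).HasRieszDecomposition :=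
  PointedCone.hasRieszDecomposition_positive.comap fun v =>
    ⟨P *ᵥ v, by rw [toLin'_apply, mulVec_mulVec, nonsing_inv_mul _ hP, one_mulVec]⟩

lemma colCone_le_positive (hP : IsUnit P.det) (hPnn : ∀ i j, 0 ≤ P i j) :
    colCone P ≤ PointedCone.positive ℝ (m → ℝ) := by
  intro v hv
  obtain ⟨u, hu, rfl⟩ := (mem_colCone_iff hP).1 hv
  exact mulVec_nonneg_of_nonneg hPnn hu

lemma colCone_mul_le (hP : IsUnit P.det) {B : Matrix m m ℝ} (hB : IsUnit B.det)
    (hBnn : ∀ i j, 0 ≤ B i j) : colCone (P * B) ≤ colCone P := by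
  intro v hv
  obtain ⟨u, hu, rfl⟩ := (mem_colCone_iff (by rw [det_mul]; exact hP.mul hB)).1 hv
  exact (mem_colCone_iff hP).2 ⟨B *ᵥ u, mulVec_nonneg_of_nonneg hBnn hu, mulVec_mulVec _ _ _⟩

/-- Writing `W = P U`, the matrix `diagonal (colsums P) * U` has column sums `1` and nonnegative
entries, so its determinant is at most `(card m)!` in absolute value. -/
lemma prod_colSum_mul_abs_det_le (hP : IsUnit P.det) (hPnn : ∀ i j, 0 ≤ P i j)
    {W : Matrix m m ℝ} (hW : ∀ k, W.col k ∈ colCone P) (hW1 : ∀ k, ∑ i, W i k = 1) :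
    (∏ j, ∑ i, P i j) * |W.det| ≤ (Fintype.card m).factorial * |P.det| := by
  set c : m → ℝ := fun j => ∑ i, P i j
  set U := P⁻¹ * W
  have hWU : W = P * U := by rw [← Matrix.mul_assoc, mul_nonsing_inv _ hP, Matrix.one_mul]
  have hc : ∀ j, 0 ≤ c j := fun j => Finset.sum_nonneg fun i _ => hPnn i j
  have hU : ∀ j k, 0 ≤ U j k := fun j k => by
    simpa [U, mulVec, dotProduct, mul_apply] using hW k j
  have hcU : ∀ k, ∑ j, c j * U j k = 1 := fun k => by
    rw [← hW1 k, hWU]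
    simp only [c, mul_apply, Finset.sum_mul]
    exact Finset.sum_comm
  have hD : ∀ j k, |(diagonal c * U) j k| ≤ 1 := fun j k => by
    rw [diagonal_mul, abs_of_nonneg (mul_nonneg (hc j) (hU j k)), ← hcU k]
    exact Finset.single_le_sum (f := fun j => c j * U j k)
      (fun j _ => mul_nonneg (hc j) (hU j k)) (Finset.mem_univ j)
  have hdet := Matrix.det_le (abv := AbsoluteValue.abs) hD
  simp only [AbsoluteValue.abs_apply, one_pow, nsmul_eq_mul, mul_one, det_mul,
    det_diagonal, abs_mul, abs_of_nonneg (Finset.prod_nonneg fun j _ => hc j)] at hdet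
  rw [hWU, det_mul, abs_mul]
  calc (∏ j, c j) * (|P.det| * |U.det|) = |P.det| * ((∏ j, c j) * |U.det|) := by ring
    _ ≤ |P.det| * (Fintype.card m).factorial := by gcongr
    _ = _ := mul_comm _ _

end ColCone

lemma PointedCone.hasRieszDecomposition_iInf {m : Type*} [Fintype m]
    {C : ℕ → PointedCone ℝ (m → ℝ)} (hanti : Antitone C)
    (hclosed : ∀ t, IsClosed (C t : Set (m → ℝ))) (hpos : ∀ t, C t ≤ positive ℝ (m → ℝ))
    (hC : ∀ t, (C t).HasRieszDecomposition) : (⨅ t, C t).HasRieszDecomposition := by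
  intro y₁ hy₁ y₂ hy₂ z hz hyz
  simp only [Submodule.mem_iInf] at hy₁ hy₂ hz hyz
  choose c hc h₁ h₂ h₃ using fun t => hC t _ (hy₁ t) _ (hy₂ t) _ (hz t) (hyz t)
  have hbox : ∀ t, c t ∈ Set.Icc 0 y₁ := fun t => ⟨hpos t (hc t), sub_nonneg.1 (hpos t (h₁ t))⟩
  obtain ⟨c₀, -, φ, hφ, hlim⟩ := isCompact_Icc.tendsto_subseq hbox
  have mem_of_limit : ∀ g : (m → ℝ) → m → ℝ, Continuous g → (∀ t, g (c t) ∈ C t) →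
      g c₀ ∈ ⨅ t, C t := by
    intro g hg hgt
    refine Submodule.mem_iInf _ |>.2 fun s =>
      (hclosed s).mem_of_tendsto ((hg.tendsto c₀).comp hlim) ?_
    filter_upwards [Filter.eventually_ge_atTop s] with k hk
    exact hanti (hk.trans hφ.le_apply) (hgt (φ k))
  exact ⟨c₀, mem_of_limit id continuous_id hc, mem_of_limit (y₁ - ·) (by fun_prop) h₁,
    mem_of_limit (z - ·) (by fun_prop) h₂, mem_of_limit (fun c => y₂ - (z - c)) (by fun_prop) h₃⟩

section Sigma

variable {n : ℕ} {M B : MatZ n}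

lemma inSigma_one : inSigma (1 : MatZ n) :=
  ⟨by simp, fun i j => by by_cases h : i = j <;> simp [one_apply, h]⟩

lemma inSigma.mul (hM : inSigma M) (hB : inSigma B) : inSigma (M * B) :=
  ⟨by rw [det_mul]; exact hM.1.mul hB.1,
    fun i j => by
      rw [mul_apply]
      exact Finset.sum_nonneg fun k _ => mul_nonneg (hM.2 i k) (hB.2 k j)⟩

lemma toR_mul (M B : MatZ n) : toR (M * B) = toR M * toR B :=
  Matrix.map_mul (f := Int.castRingHom ℝ)

lemma inSigma.toR_nonneg (hM : inSigma M) (i j : Fin (n + 1)) : 0 ≤ toR M i j := by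
  simpa [toR] using hM.2 i j

lemma inSigma.abs_det_toR (hM : inSigma M) : |(toR M).det| = 1 := by
  have hdet : (toR M).det = M.det := by simpa [toR] using ((Int.castRingHom ℝ).map_det M).symm
  rw [hdet]
  rcases Int.isUnit_iff.1 hM.1 with h | h <;> simp [h]

lemma inSigma.isUnit_det_toR (hM : inSigma M) : IsUnit (toR M).det :=
  isUnit_iff_ne_zero.2 fun h => by simpa [h] using hM.abs_det_toR

lemma inSigma.exists_perm_one_le (hM : inSigma M) : ∃ σ : Equiv.Perm (Fin (n + 1)),
    ∀ j, 1 ≤ M (σ j) j := by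
  by_contra! h
  have hdet : M.det = 0 := by
    rw [det_apply]
    refine Finset.sum_eq_zero fun σ _ => ?_
    obtain ⟨j, hj⟩ := h σ
    rw [Finset.prod_eq_zero (f := fun i => M (σ i) i) (Finset.mem_univ j)
      (le_antisymm (by omega) (hM.2 _ _)), smul_zero]
  exact not_isUnit_zero (hdet ▸ hM.1)

lemma inSigma.one_le_colSum (hM : inSigma M) (j : Fin (n + 1)) : 1 ≤ ∑ i, M i j := by
  obtain ⟨σ, hσ⟩ := hM.exists_perm_one_le
  exact (hσ j).trans (Finset.single_le_sum (fun i _ => hM.2 i j) (Finset.mem_univ _))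

lemma inSigma.isPermMat_of_colSum_le_one (hB : inSigma B) (h : ∀ j, ∑ i, B i j ≤ 1) :
    IsPermMat B := by
  obtain ⟨σ, hσ⟩ := hB.exists_perm_one_le
  refine ⟨σ, fun i j => ?_⟩
  have hsplit := Finset.add_sum_erase Finset.univ (fun k => B k j) (Finset.mem_univ (σ j))
  have hnn : ∀ k ∈ Finset.univ.erase (σ j), 0 ≤ B k j := fun k _ => hB.2 k j
  have hrest : ∑ k ∈ Finset.univ.erase (σ j), B k j = 0 :=
    le_antisymm (by linarith [h j, hσ j]) (Finset.sum_nonneg hnn)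
  split_ifs with hij
  · subst hij
    linarith [h j, hσ j]
  · exact (Finset.sum_eq_zero_iff_of_nonneg hnn).1 hrest i (Finset.mem_erase.2 ⟨hij, by simp⟩)

lemma inSigma.colSum_mul_ge (hM : inSigma M) (hB : inSigma B) {σ : Equiv.Perm (Fin (n + 1))}
    (hσ : ∀ j, 1 ≤ B (σ j) j) (j : Fin (n + 1)) :
    ∑ i, M i (σ j) + ∑ i, B i j - 1 ≤ ∑ i, (M * B) i j := by
  have hexpand : ∑ i, (M * B) i j = ∑ k, (∑ i, M i k) * B k j := by
    simp only [mul_apply, Finset.sum_mul]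
    exact Finset.sum_comm
  have hsplit := Finset.add_sum_erase Finset.univ (fun k => (∑ i, M i k) * B k j)
    (Finset.mem_univ (σ j))
  have hsplitB := Finset.add_sum_erase Finset.univ (fun k => B k j) (Finset.mem_univ (σ j))
  have hdiag : ∑ i, M i (σ j) + B (σ j) j - 1 ≤ (∑ i, M i (σ j)) * B (σ j) j := by
    nlinarith [hM.one_le_colSum (σ j), hσ j]
  have hoff : ∑ k ∈ Finset.univ.erase (σ j), B k j ≤
      ∑ k ∈ Finset.univ.erase (σ j), (∑ i, M i k) * B k j :=
    Finset.sum_le_sum fun k _ => le_mul_of_one_le_left (hB.2 k j) (hM.one_le_colSum k)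
  linarith

def colSumProd (M : MatZ n) : ℤ := ∏ j, ∑ i, M i j

lemma inSigma.colSumProd_le_mul (hM : inSigma M) (hB : inSigma B) :
    colSumProd M ≤ colSumProd (M * B) := by
  obtain ⟨σ, hσ⟩ := hB.exists_perm_one_le
  rw [colSumProd, ← Equiv.prod_comp σ]
  exact Finset.prod_le_prod (fun j _ => by linarith [hM.one_le_colSum (σ j)])
    fun j _ => by linarith [hM.colSum_mul_ge hB hσ j, hB.one_le_colSum j]

lemma inSigma.colSumProd_lt_mul (hM : inSigma M) (hB : inSigma B) (hBp : ¬ IsPermMat B) :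
    colSumProd M < colSumProd (M * B) := by
  obtain ⟨σ, hσ⟩ := hB.exists_perm_one_le
  obtain ⟨j₀, hj₀⟩ : ∃ j, 1 < ∑ i, B i j := by
    by_contra! h
    exact hBp (hB.isPermMat_of_colSum_le_one h)
  rw [colSumProd, ← Equiv.prod_comp σ]
  exact Finset.prod_lt_prod (fun j _ => by linarith [hM.one_le_colSum (σ j)])
    (fun j _ => by linarith [hM.colSum_mul_ge hB hσ j, hB.one_le_colSum j])
    ⟨j₀, Finset.mem_univ _, by linarith [hM.colSum_mul_ge hB hσ j₀]⟩

lemma prod_colSum_toR (M : MatZ n) : ∏ j, ∑ i, toR M i j = colSumProd M := by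
  simp [colSumProd, toR]

end Sigma

section PartialProducts

variable {n : ℕ} {A : ℕ → MatZ n}

def partialProd (A : ℕ → MatZ n) (t : ℕ) : MatZ n := ((List.range t).map A).prod

lemma partialProd_succ (t : ℕ) : partialProd A (t + 1) = partialProd A t * A t := by
  simp [partialProd, List.range_succ]

variable (hA : ∀ t, inSigma (A t))
include hA

lemma inSigma_partialProd (t : ℕ) : inSigma (partialProd A t) := by
  induction t with
  | zero => exact inSigma_one
  | succ t ih => rw [partialProd_succ]; exact ih.mul (hA t)

lemma monotone_colSumProd_partialProd : Monotone fun t => colSumProd (partialProd A t) :=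
  monotone_nat_of_le_succ fun t => by
    rw [partialProd_succ]
    exact (inSigma_partialProd hA t).colSumProd_le_mul (hA t)

lemma exists_le_colSumProd_partialProd (hinf : {t : ℕ | ¬ IsPermMat (A t)}.Infinite) (N : ℕ) :
    ∃ t, (N : ℤ) ≤ colSumProd (partialProd A t) := by
  induction N with
  | zero =>
    refine ⟨0, ?_⟩
    rw [Nat.cast_zero]
    exact Finset.prod_nonneg fun j _ =>
      zero_le_one.trans ((inSigma_partialProd hA 0).one_le_colSum j)
  | succ N ih =>
    obtain ⟨t, ht⟩ := ih
    obtain ⟨t', ht', htt'⟩ := hinf.exists_gt t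
    refine ⟨t' + 1, ?_⟩
    have hlt := (inSigma_partialProd hA t').colSumProd_lt_mul (hA t') ht'
    rw [← partialProd_succ] at hlt
    have hle := monotone_colSumProd_partialProd hA htt'.le
    push_cast
    linarith

end PartialProducts

section Simplex

open Set

def coordSum (m : Type*) [Fintype m] : (m → ℝ) →ₗ[ℝ] ℝ := ∑ i, LinearMap.proj i

@[simp]
lemma coordSum_apply {m : Type*} [Fintype m] (v : m → ℝ) : coordSum m v = ∑ i, v i := by
  simp [coordSum]

lemma sum_pos_of_nonneg_of_ne_zero {m : Type*} [Fintype m] {v : m → ℝ} (hv : 0 ≤ v)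
    (hv0 : v ≠ 0) : 0 < ∑ i, v i := by
  obtain ⟨i, hi⟩ := Function.ne_iff.1 hv0
  exact Finset.sum_pos' (fun j _ => hv j) ⟨i, Finset.mem_univ i, (hv i).lt_of_ne' hi⟩

variable {n : ℕ}

lemma projAct_image_stdSimplex {P : Matrix (Fin (n + 1)) (Fin (n + 1)) ℝ} (hP : IsUnit P.det)
    (hPnn : ∀ i j, 0 ≤ P i j) :
    projAct P '' stdSimplex ℝ (Fin (n + 1)) = ↑(colCone P) ∩ coordSum _ ⁻¹' {1} := by
  ext v
  simp only [mem_image, mem_inter_iff, SetLike.mem_coe, mem_preimage, mem_singleton_iff,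
    coordSum_apply]
  constructor
  · rintro ⟨x, hx, rfl⟩
    have hx0 : x ≠ 0 := fun h => by simpa [h] using hx.2
    have hPx0 : P *ᵥ x ≠ 0 := fun h => hx0 <| by
      simpa [mulVec_mulVec, nonsing_inv_mul _ hP] using congrArg (P⁻¹ *ᵥ ·) h
    have hs := sum_pos_of_nonneg_of_ne_zero (mulVec_nonneg_of_nonneg hPnn hx.1) hPx0
    refine ⟨(mem_colCone_iff hP).2 ⟨_, smul_nonneg (inv_nonneg.2 hs.le) hx.1, ?_⟩, ?_⟩
    · rw [mulVec_smul]
      rfl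
    · simp [projAct, ← Finset.mul_sum, hs.ne']
  · rintro ⟨hv, hv1⟩
    obtain ⟨u, hu, rfl⟩ := (mem_colCone_iff hP).1 hv
    have hu0 : u ≠ 0 := by
      rintro rfl
      simp at hv1
    have hs := sum_pos_of_nonneg_of_ne_zero hu hu0
    refine ⟨(∑ i, u i)⁻¹ • u, ⟨fun i => mul_nonneg (inv_nonneg.2 hs.le) (hu i), ?_⟩, ?_⟩
    · simp [← Finset.mul_sum, hs.ne']
    · simp [projAct, mulVec_smul, ← Finset.mul_sum, hv1, smul_smul, hs.ne']

lemma inSigma.simg_eq {M : MatZ n} (hM : inSigma M) :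
    simg M = ↑(colCone (toR M)) ∩ coordSum _ ⁻¹' {1} :=
  projAct_image_stdSimplex hM.isUnit_det_toR hM.toR_nonneg

end Simplex

section LimitCone

open Set

variable {n : ℕ} {A : ℕ → MatZ n}

noncomputable def limitCone (A : ℕ → MatZ n) : PointedCone ℝ (Fin (n + 1) → ℝ) :=
  ⨅ t, colCone (toR (partialProd A t))

variable (hA : ∀ t, inSigma (A t))
include hA

lemma antitone_colCone_partialProd : Antitone fun t => colCone (toR (partialProd A t)) :=
  antitone_nat_of_succ_le fun t => by
    simp only [partialProd_succ, toR_mul]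
    exact colCone_mul_le (inSigma_partialProd hA t).isUnit_det_toR (hA t).isUnit_det_toR
      (hA t).toR_nonneg

lemma colCone_partialProd_le_positive (t : ℕ) :
    colCone (toR (partialProd A t)) ≤ PointedCone.positive ℝ _ :=
  colCone_le_positive (inSigma_partialProd hA t).isUnit_det_toR
    (inSigma_partialProd hA t).toR_nonneg

lemma hasRieszDecomposition_limitCone : (limitCone A).HasRieszDecomposition :=
  PointedCone.hasRieszDecomposition_iInf (antitone_colCone_partialProd hA)
    (fun _ => isClosed_colCone _) (colCone_partialProd_le_positive hA)
    fun t => hasRieszDecomposition_colCone (inSigma_partialProd hA t).isUnit_det_toR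

lemma coordSum_pos_of_mem_limitCone {v : Fin (n + 1) → ℝ} (hv : v ∈ limitCone A) (hv0 : v ≠ 0) :
    0 < coordSum _ v := by
  rw [coordSum_apply]
  exact sum_pos_of_nonneg_of_ne_zero
    (colCone_partialProd_le_positive hA 0 ((Submodule.mem_iInf _).1 hv 0)) hv0

lemma iInter_simg_partialProd :
    ⋂ t, simg (partialProd A t) = ↑(limitCone A) ∩ coordSum _ ⁻¹' {1} := by
  simp only [fun t => (inSigma_partialProd hA t).simg_eq, ← iInter_inter, limitCone,
    Submodule.coe_iInf]

lemma isCompact_iInter_simg_partialProd : IsCompact (⋂ t, simg (partialProd A t)) := by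
  rw [iInter_simg_partialProd hA]
  refine (isCompact_stdSimplex ℝ _).of_isClosed_subset ?_ fun v hv => ?_
  · rw [limitCone, Submodule.coe_iInf]
    exact (isClosed_iInter fun _ => isClosed_colCone _).inter
      (isClosed_singleton.preimage (LinearMap.continuous_of_finiteDimensional _))
  · exact ⟨colCone_partialProd_le_positive hA 0 ((Submodule.mem_iInf _).1 hv.1 0),
      by simpa using hv.2⟩

lemma convex_iInter_simg_partialProd : Convex ℝ (⋂ t, simg (partialProd A t)) := by
  rw [iInter_simg_partialProd hA]
  exact convex_cone_inter_hyperplane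

lemma affineIndependent_of_mem_extremePoints_iInter_simg {ι : Type*}
    {p : ι → Fin (n + 1) → ℝ} (hp_inj : Function.Injective p)
    (hp : ∀ i, p i ∈ (⋂ t, simg (partialProd A t)).extremePoints ℝ) : AffineIndependent ℝ p := by
  rw [iInter_simg_partialProd hA] at hp
  exact affineIndependent_of_mem_extremePoints (fun _ => coordSum_pos_of_mem_limitCone hA)
    (hasRieszDecomposition_limitCone hA) hp_inj hp

variable (hinf : {t : ℕ | ¬ IsPermMat (A t)}.Infinite)
include hinf

lemma det_eq_zero_of_col_mem_iInter_simg {W : Matrix (Fin (n + 1)) (Fin (n + 1)) ℝ}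
    (hW : ∀ k, W.col k ∈ ⋂ t, simg (partialProd A t)) : W.det = 0 := by
  have hbound : ∀ t, (colSumProd (partialProd A t) : ℝ) * |W.det| ≤ (n + 1).factorial := by
    intro t
    have hP := inSigma_partialProd hA t
    have hWt : ∀ k, W.col k ∈ simg (partialProd A t) := fun k => mem_iInter.1 (hW k) t
    rw [hP.simg_eq] at hWt
    have := prod_colSum_mul_abs_det_le hP.isUnit_det_toR hP.toR_nonneg (fun k => (hWt k).1)
      fun k => by simpa using (hWt k).2
    rwa [prod_colSum_toR, hP.abs_det_toR, mul_one, Fintype.card_fin] at this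
  by_contra hdet
  have hpos : 0 < |W.det| := abs_pos.2 hdet
  obtain ⟨N, hN⟩ := exists_nat_gt ((n + 1).factorial / |W.det|)
  obtain ⟨t, ht⟩ := exists_le_colSumProd_partialProd hA hinf N
  rw [div_lt_iff₀ hpos] at hN
  have hNt : (N : ℝ) * |W.det| ≤ colSumProd (partialProd A t) * |W.det| :=
    mul_le_mul_of_nonneg_right (by exact_mod_cast ht) hpos.le
  linarith [hbound t]

lemma card_le_of_linearIndependent {s : Finset (Fin (n + 1) → ℝ)}
    (hs : ↑s ⊆ ⋂ t, simg (partialProd A t))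
    (hli : LinearIndependent ℝ ((↑) : s → Fin (n + 1) → ℝ)) : s.card ≤ n := by
  by_contra! hcard
  let e : Fin (n + 1) ↪ s := (Fin.castLEEmb hcard).trans s.equivFin.symm.toEmbedding
  let W : Matrix (Fin (n + 1)) (Fin (n + 1)) ℝ := Matrix.of fun i k => (e k : Fin (n + 1) → ℝ) i
  have hW : IsUnit W := linearIndependent_cols_iff_isUnit.1 (hli.comp e e.injective)
  exact ((isUnit_iff_isUnit_det W).1 hW).ne_zero
    (det_eq_zero_of_col_mem_iInter_simg hA hinf fun k => hs (e k).2)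

lemma card_le_of_subset_extremePoints {s : Finset (Fin (n + 1) → ℝ)}
    (hs : ↑s ⊆ (⋂ t, simg (partialProd A t)).extremePoints ℝ) : s.card ≤ n := by
  have hsK := hs.trans extremePoints_subset
  have hli := (affineIndependent_of_mem_extremePoints_iInter_simg hA Subtype.val_injective
    fun v => hs v.2).linearIndependent_of_map_eq_one (f := coordSum _)
  rw [iInter_simg_partialProd hA] at hsK
  exact card_le_of_linearIndependent hA hinf (hs.trans extremePoints_subset)
    (hli fun v => (hsK v.2).2)

end LimitCone

open Set in
theorem stmt1_general (n : ℕ) (A : ℕ → MatZ n)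
    (hA : ∀ t, inSigma (A t))
    (hinf : {t : ℕ | ¬ IsPermMat (A t)}.Infinite) :
    ∃ V : Finset (Fin (n + 1) → ℝ),
      AffineIndependent ℝ (fun v : V => (v : Fin (n + 1) → ℝ)) ∧
      (⋂ t : ℕ, simg (((List.range t).map A).prod)) = convexHull ℝ (V : Set (Fin (n + 1) → ℝ)) ∧
      V.card ≤ n := by
  change ∃ V : Finset _, _ ∧ ⋂ t, simg (partialProd A t) = _ ∧ _
  set K := ⋂ t, simg (partialProd A t)
  have hfin : (K.extremePoints ℝ).Finite := not_infinite.1 fun h => by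
    obtain ⟨s, hs, hsn⟩ := h.exists_subset_card_eq (n + 1)
    have := card_le_of_subset_extremePoints hA hinf hs
    omega
  refine ⟨hfin.toFinset, affineIndependent_of_mem_extremePoints_iInter_simg hA
    Subtype.val_injective fun v => hfin.mem_toFinset.1 v.2, ?_,
    card_le_of_subset_extremePoints hA hinf hfin.coe_toFinset.subset⟩
  rw [hfin.coe_toFinset, ← (hfin.isClosed_convexHull ℝ).closure_eq]
  exact (closure_convexHull_extremePoints (isCompact_iInter_simg_partialProd hA)
    (convex_iInter_simg_partialProd hA)).symm

theorem stmt1 (n : ℕ) (hn : 1 ≤ n) (A : ℕ → MatZ n)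
    (hA : ∀ t, inSigma (A t))
    (hinf : {t : ℕ | ¬ IsPermMat (A t)}.Infinite) :
    ∃ V : Finset (Fin (n + 1) → ℝ),
      AffineIndependent ℝ (fun v : V => (v : Fin (n + 1) → ℝ)) ∧
      (⋂ t : ℕ, simg (((List.range t).map A).prod)) = convexHull ℝ (V : Set (Fin (n + 1) → ℝ)) ∧
      V.card ≤ n :=
  stmt1_general n A hA hinf
end

section
/- The three pairs (M_0, M_1), (M_0, M_1F), (M_0F, M_1) are pairwise inequivalent under the action of S_2 × S_{n−1}: for no two distinct pairs (A_0, A_1), (A_0', A_1') among them does there exist a permutation matrix H fixing both e_0 and e_1 with (A_0', A_1') = (HA_0H^{−1}, HA_1H^{−1}) or (A_0', A_1') = (FHA_1H^{−1}F, FHA_0H^{−1}F). -/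
open Matrix

/-!
The trace `A 0 0 + A 1 1` of the upper-left `2 × 2` block is unchanged by conjugation with a
permutation matrix fixing `e₀` and `e₁`, and by conjugation with `F`, which swaps them. Hence the
sum of these traces over a pair `(A₀, A₁)` is invariant under both actions of `S₂ × S_{n-1}`.
With `c = R₀₁` (which is `1` exactly when `n = 1`), this sum is `2c + 1`, `2c + 2` and `2c` on the
three pairs.
-/

variable {n : ℕ}

lemma permMat_mul_apply (σ : Equiv.Perm (Fin (n + 1))) (A : MatZ n) (i j : Fin (n + 1)) :
    (permMat σ * A) i j = A (σ⁻¹ i) j := by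
  rw [Matrix.mul_apply, Finset.sum_eq_single (σ⁻¹ i)]
  · simp [permMat]
  · intro k _ hk
    have : i ≠ σ k := fun h => hk (by simp [h])
    simp [permMat, this]
  · simp

lemma mul_permMat_apply (A : MatZ n) (σ : Equiv.Perm (Fin (n + 1))) (i j : Fin (n + 1)) :
    (A * permMat σ) i j = A i (σ j) := by
  rw [Matrix.mul_apply, Finset.sum_eq_single (σ j)]
  · simp [permMat]
  · intro k _ hk
    simp [permMat, hk]
  · simp

lemma Fmat_eq_permMat : Fmat n = permMat (Equiv.swap 0 1) := rfl

lemma Fmat_mul_apply (A : MatZ n) (i j : Fin (n + 1)) :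
    (Fmat n * A) i j = A (Equiv.swap 0 1 i) j := by
  rw [Fmat_eq_permMat, permMat_mul_apply, Equiv.swap_inv]

lemma mul_Fmat_apply (A : MatZ n) (i j : Fin (n + 1)) :
    (A * Fmat n) i j = A i (Equiv.swap 0 1 j) := by
  rw [Fmat_eq_permMat, mul_permMat_apply]

def cornerTrace (A : MatZ n) : ℤ := A 0 0 + A 1 1

def pairCornerTrace (p : MatZ n × MatZ n) : ℤ := cornerTrace p.1 + cornerTrace p.2

lemma cornerTrace_permMat_conj {σ : Equiv.Perm (Fin (n + 1))} (h0 : σ 0 = 0) (h1 : σ 1 = 1)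
    (A : MatZ n) : cornerTrace (permMat σ * A * permMat σ⁻¹) = cornerTrace A := by
  have h0' : σ⁻¹ 0 = 0 := Equiv.Perm.inv_eq_iff_eq.mpr h0.symm
  have h1' : σ⁻¹ 1 = 1 := Equiv.Perm.inv_eq_iff_eq.mpr h1.symm
  simp only [cornerTrace, mul_permMat_apply, permMat_mul_apply, h0', h1']

lemma cornerTrace_Fmat_conj (A : MatZ n) : cornerTrace (Fmat n * A * Fmat n) = cornerTrace A := by
  simp only [cornerTrace, mul_Fmat_apply, Fmat_mul_apply, Equiv.swap_apply_left,
    Equiv.swap_apply_right, add_comm]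

section NeZero

variable [NeZero n]

lemma Nmat_eq : Nmat n = 1 + single 0 1 1 := by
  ext i j
  by_cases hij : i = j
  · subst hij
    have : ¬(0 = i ∧ 1 = i) := fun ⟨h0, h1⟩ => Fin.zero_ne_one' (h0.trans h1.symm)
    simp [Nmat, this]
  · simp [Nmat, single_apply, hij, and_comm, eq_comm]

lemma Nmat_mul_apply (A : MatZ n) (i j : Fin (n + 1)) :
    (Nmat n * A) i j = A i j + if i = 0 then A 1 j else 0 := by
  rw [Nmat_eq, add_mul, one_mul, Matrix.add_apply]
  split_ifs with hi
  · rw [hi, single_mul_apply_same, one_mul]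
  · rw [single_mul_apply_of_ne (h := hi), add_zero]

lemma Lmat_mul_apply (A : MatZ n) (i j : Fin (n + 1)) :
    (Lmat n * A) i j = A i j + if i = 1 then A 0 j else 0 := by
  rw [Lmat, mul_assoc, mul_assoc, Fmat_mul_apply, Nmat_mul_apply, Fmat_mul_apply,
    Fmat_mul_apply, Equiv.swap_apply_self, Equiv.swap_apply_right]
  simp only [Equiv.swap_apply_eq_iff, Equiv.swap_apply_left]

lemma Mon0_apply (i j : Fin (n + 1)) :
    Mon0 n i j = Rmat n (Equiv.swap 0 1 i) j + if i = 0 then Rmat n 0 j else 0 := by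
  rw [Mon0, mul_assoc, Nmat_mul_apply, Fmat_mul_apply, Fmat_mul_apply, Equiv.swap_apply_right]

lemma Mon1_apply (i j : Fin (n + 1)) :
    Mon1 n i j = Rmat n i j + if i = 1 then Rmat n 0 j else 0 :=
  Lmat_mul_apply _ i j

lemma cornerTrace_Mon0 : cornerTrace (Mon0 n) = 1 + Rmat n 0 1 := by
  simp [cornerTrace, Mon0_apply, Rmat]

lemma cornerTrace_Mon1 : cornerTrace (Mon1 n) = Rmat n 0 1 := by
  simp [cornerTrace, Mon1_apply, Rmat]

lemma cornerTrace_Mon0_mul_Fmat : cornerTrace (Mon0 n * Fmat n) = Rmat n 0 1 := by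
  simp [cornerTrace, mul_Fmat_apply, Mon0_apply, Rmat]

lemma cornerTrace_Mon1_mul_Fmat : cornerTrace (Mon1 n * Fmat n) = 1 + Rmat n 0 1 := by
  simp [cornerTrace, mul_Fmat_apply, Mon1_apply, Rmat, add_comm]

lemma eq_of_pairCornerTrace_eq {p q : MatZ n × MatZ n}
    (hp : p = (Mon0 n, Mon1 n) ∨ p = (Mon0 n, Mon1 n * Fmat n) ∨ p = (Mon0 n * Fmat n, Mon1 n))
    (hq : q = (Mon0 n, Mon1 n) ∨ q = (Mon0 n, Mon1 n * Fmat n) ∨ q = (Mon0 n * Fmat n, Mon1 n))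
    (h : pairCornerTrace p = pairCornerTrace q) : p = q := by
  rcases hp with rfl | rfl | rfl <;> rcases hq with rfl | rfl | rfl <;>
    simp only [pairCornerTrace, cornerTrace_Mon0, cornerTrace_Mon1, cornerTrace_Mon0_mul_Fmat,
      cornerTrace_Mon1_mul_Fmat] at h <;> first | rfl | omega

end NeZero

theorem stmt5 (n : ℕ) (hn : 1 ≤ n) (p q : MatZ n × MatZ n)
    (hp : p = (Mon0 n, Mon1 n) ∨ p = (Mon0 n, Mon1 n * Fmat n) ∨ p = (Mon0 n * Fmat n, Mon1 n))
    (hq : q = (Mon0 n, Mon1 n) ∨ q = (Mon0 n, Mon1 n * Fmat n) ∨ q = (Mon0 n * Fmat n, Mon1 n))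
    (hpq : p ≠ q)
    (σ : Equiv.Perm (Fin (n + 1))) (h0 : σ 0 = 0) (h1 : σ 1 = 1) :
    q ≠ (permMat σ * p.1 * permMat σ⁻¹, permMat σ * p.2 * permMat σ⁻¹) ∧
    q ≠ (Fmat n * (permMat σ * p.2 * permMat σ⁻¹) * Fmat n,
         Fmat n * (permMat σ * p.1 * permMat σ⁻¹) * Fmat n) := by
  have : NeZero n := ⟨by omega⟩
  refine ⟨fun h => hpq ?_, fun h => hpq ?_⟩ <;> refine eq_of_pairCornerTrace_eq hp hq ?_ <;>
    rw [h, pairCornerTrace, pairCornerTrace] <;>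
    simp only [cornerTrace_Fmat_conj, cornerTrace_permMat_conj h0 h1, add_comm]
end

section
/- Let E ∈ Σ satisfy E e_i = e_i for some index i, and suppose the spectral radius of E is strictly greater than 1. Then the intersection over t ≥ 0 of E^t[Δ] contains at least two distinct points (namely e_i and a point v ∈ Δ with Ev = ρv, where ρ > 1 is the spectral radius), hence is not a singleton. -/
open Matrix

/-!
The vertex `e_i` and any eigenvector `v ∈ Δ` of `E` with eigenvalue `ρ > 0` are fixed by the
projective action of every power of `E`, so both lie in `⋂ₜ Eᵗ[Δ]`; they differ as soon as `ρ ≠ 1`.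
Such a `v` with `ρ ≥ |μ| > 1` is produced by the weak Perron–Frobenius theorem. If `E z = μ z`, then
`y = |z|` satisfies `E y ≥ |μ| y`. For a positive matrix `B`, a maximiser `(ρ, x)` of `ρ` subject to
`B x ≥ ρ x`, `x ∈ Δ`, is an eigenpair, since otherwise `B (B x) - ρ B x = B (B x - ρ x)` is strictly
positive and `ρ` could be increased. A nonnegative matrix is the limit of the positive matrices
`E + J/(k+1)`, and the eigenpairs of these accumulate, by compactness, at an eigenpair of `E`.
-/

open Filter Topology

namespace Matrix

variable {ι : Type*} [Fintype ι]

theorem le_sum_sum_of_smul_le_mulVec {A : Matrix ι ι ℝ} (hA : ∀ i j, 0 ≤ A i j)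
    {x : ι → ℝ} (hx : x ∈ stdSimplex ℝ ι) {c : ℝ} (h : c • x ≤ A *ᵥ x) :
    c ≤ ∑ i, ∑ j, A i j := by
  have hx1 : ∀ j, x j ≤ 1 := fun j =>
    hx.2 ▸ Finset.single_le_sum (fun k _ => hx.1 k) (Finset.mem_univ j)
  calc c = ∑ i, (c • x) i := by simp [← Finset.mul_sum, hx.2]
    _ ≤ ∑ i, (A *ᵥ x) i := Finset.sum_le_sum fun i _ => h i
    _ ≤ ∑ i, ∑ j, A i j := Finset.sum_le_sum fun i _ => Finset.sum_le_sum fun j _ =>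
        mul_le_of_le_one_right (hA i j) (hx1 j)

theorem pos_mulVec_apply_of_pos {B : Matrix ι ι ℝ} (hB : ∀ i j, 0 < B i j) {z : ι → ℝ}
    (hz : 0 < z) (i : ι) : 0 < (B *ᵥ z) i := by
  obtain ⟨hz0, j, hj⟩ := Pi.lt_def.1 hz
  exact Finset.sum_pos' (fun k _ => mul_nonneg (hB i k).le (hz0 k))
    ⟨j, Finset.mem_univ j, mul_pos (hB i j) hj⟩

theorem exists_mem_stdSimplex_smul_le_mulVec {A : Matrix ι ι ℝ} {w : ι → ℝ} (hw : 0 < w)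
    {c : ℝ} (h : c • w ≤ A *ᵥ w) : ∃ v ∈ stdSimplex ℝ ι, c • v ≤ A *ᵥ v := by
  obtain ⟨hw0, j, hj⟩ := Pi.lt_def.1 hw
  have hs : 0 < ∑ i, w i := Finset.sum_pos' (fun i _ => hw0 i) ⟨j, Finset.mem_univ j, hj⟩
  refine ⟨(∑ i, w i)⁻¹ • w, ⟨fun i => mul_nonneg (inv_nonneg.2 hs.le) (hw0 i), ?_⟩, ?_⟩
  · simp [← Finset.mul_sum, hs.ne']
  · rw [smul_comm, mulVec_smul]
    exact smul_le_smul_of_nonneg_left h (inv_nonneg.2 hs.le)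

theorem exists_smul_le_mulVec_of_pos {B : Matrix ι ι ℝ} (hB : ∀ i j, 0 < B i j) {x : ι → ℝ}
    (hx : x ∈ stdSimplex ℝ ι) {ρ : ℝ} (hρ : ρ • x ≤ B *ᵥ x) (hne : B *ᵥ x ≠ ρ • x) :
    ∃ δ > 0, ∃ w ∈ stdSimplex ℝ ι, (ρ + δ) • w ≤ B *ᵥ w := by
  have hx0 : 0 < x := lt_of_le_of_ne hx.1 fun h => by simpa [← h] using hx.2
  set w := B *ᵥ x
  have hw : ∀ i, 0 < w i := pos_mulVec_apply_of_pos hB hx0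
  have hz : ∀ i, 0 < (B *ᵥ (w - ρ • x)) i :=
    pos_mulVec_apply_of_pos hB (sub_pos.2 (lt_of_le_of_ne hρ (Ne.symm hne)))
  obtain ⟨δ, hδw, hδ⟩ : ∃ δ : ℝ, (∀ i, δ * w i < (B *ᵥ (w - ρ • x)) i) ∧ 0 < δ := by
    refine ((eventually_all.2 fun i => nhdsWithin_le_nhds ?_).and
      (self_mem_nhdsWithin (s := Set.Ioi 0) (a := (0 : ℝ)))).exists
    exact (continuous_id.mul continuous_const).tendsto' 0 0 (zero_mul _) |>.eventually
      (gt_mem_nhds (hz i))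
  obtain ⟨-, j, -⟩ := Pi.lt_def.1 hx0
  refine ⟨δ, hδ, exists_mem_stdSimplex_smul_le_mulVec
    (Pi.lt_def.2 ⟨fun i => (hw i).le, j, hw j⟩) fun i => ?_⟩
  have := hδw i
  rw [mulVec_sub, mulVec_smul] at this
  simp only [Pi.smul_apply, Pi.sub_apply, smul_eq_mul] at this ⊢
  linarith

theorem exists_eigenvector_stdSimplex_of_pos {B : Matrix ι ι ℝ} (hB : ∀ i j, 0 < B i j)
    {y : ι → ℝ} (hy : y ∈ stdSimplex ℝ ι) {c : ℝ} (hc : c • y ≤ B *ᵥ y) :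
    ∃ ρ, c ≤ ρ ∧ ∃ x ∈ stdSimplex ℝ ι, B *ᵥ x = ρ • x := by
  set C := ∑ i, ∑ j, B i j
  have hbound : ∀ {x : ι → ℝ} {d : ℝ}, x ∈ stdSimplex ℝ ι → d • x ≤ B *ᵥ x → d ≤ C :=
    fun hx h => le_sum_sum_of_smul_le_mulVec (fun i j => (hB i j).le) hx h
  set K := (Set.Icc c C ×ˢ stdSimplex ℝ ι) ∩ {p | p.1 • p.2 ≤ B *ᵥ p.2}
  have hK : IsCompact K := (isCompact_Icc.prod (isCompact_stdSimplex ℝ ι)).inter_right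
    (isClosed_le (continuous_fst.smul continuous_snd)
      (continuous_const.matrix_mulVec continuous_snd))
  obtain ⟨⟨ρ, x⟩, ⟨⟨hρ, hx⟩, hρx⟩, hmax⟩ :=
    hK.exists_isMaxOn ⟨(c, y), ⟨⟨le_rfl, hbound hy hc⟩, hy⟩, hc⟩ continuous_fst.continuousOn
  refine ⟨ρ, hρ.1, x, hx, ?_⟩
  by_contra hne
  obtain ⟨δ, hδ, w, hw, hδw⟩ := exists_smul_le_mulVec_of_pos hB hx hρx hne
  have : ρ + δ ≤ ρ := hmax (a := (ρ + δ, w)) ⟨⟨⟨by linarith [hρ.1], hbound hw hδw⟩, hw⟩, hδw⟩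
  linarith

theorem exists_eigenvector_stdSimplex_of_nonneg {A : Matrix ι ι ℝ} (hA : ∀ i j, 0 ≤ A i j)
    {y : ι → ℝ} (hy : y ∈ stdSimplex ℝ ι) {c : ℝ} (hc : c • y ≤ A *ᵥ y) :
    ∃ ρ, c ≤ ρ ∧ ∃ x ∈ stdSimplex ℝ ι, A *ᵥ x = ρ • x := by
  set J : Matrix ι ι ℝ := of fun _ _ => 1
  set B : ℕ → Matrix ι ι ℝ := fun k => A + (1 / ((k : ℝ) + 1)) • J
  have hB_apply : ∀ k i j, B k i j = A i j + 1 / ((k : ℝ) + 1) := fun k i j => by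
    simp [B, J]
  have hε : ∀ k : ℕ, 0 < 1 / ((k : ℝ) + 1) ∧ 1 / ((k : ℝ) + 1) ≤ 1 := fun k =>
    ⟨Nat.one_div_pos_of_nat, Nat.one_div_le_one_div (Nat.zero_le k) |>.trans_eq (by simp)⟩
  have hB : ∀ k i j, 0 < B k i j := fun k i j => by
    rw [hB_apply]; linarith [hA i j, (hε k).1]
  have hBy : ∀ k, c • y ≤ B k *ᵥ y := fun k => hc.trans fun i =>
    Finset.sum_le_sum fun j _ => mul_le_mul_of_nonneg_right
      (show A i j ≤ B k i j by rw [hB_apply]; linarith [(hε k).1]) (hy.1 j)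
  choose ρ hcρ x hx hBx using fun k => exists_eigenvector_stdSimplex_of_pos (hB k) hy (hBy k)
  have hρC : ∀ k, ρ k ≤ ∑ i, ∑ j, (A + J) i j := fun k =>
    (le_sum_sum_of_smul_le_mulVec (fun i j => (hB k i j).le) (hx k) (hBx k).ge).trans <|
      Finset.sum_le_sum fun i _ => Finset.sum_le_sum fun j _ => by
        rw [hB_apply]; simpa [J] using (hε k).2
  obtain ⟨⟨ρ₀, x₀⟩, ⟨hρ₀, hx₀⟩, φ, hφ, hlim⟩ :=
    (isCompact_Icc.prod (isCompact_stdSimplex ℝ ι)).tendsto_subseq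
      (x := fun k => (ρ k, x k)) fun k => ⟨⟨hcρ k, hρC k⟩, hx k⟩
  refine ⟨ρ₀, hρ₀.1, x₀, hx₀, sub_eq_zero.1 ?_⟩
  have hBA : Tendsto B atTop (𝓝 A) := by
    simpa [B] using (tendsto_const_nhds (x := A)).add
      ((tendsto_one_div_add_atTop_nhds_zero_nat (𝕜 := ℝ)).smul_const J)
  have hF : Continuous fun p : Matrix ι ι ℝ × ℝ × (ι → ℝ) => p.1 *ᵥ p.2.2 - p.2.1 • p.2.2 :=
    (continuous_fst.matrix_mulVec (continuous_snd.comp continuous_snd)).sub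
      ((continuous_fst.comp continuous_snd).smul (continuous_snd.comp continuous_snd))
  refine tendsto_nhds_unique
    ((hF.tendsto _).comp ((hBA.comp hφ.tendsto_atTop).prodMk_nhds hlim)) ?_
  simp [Function.comp_def, hBx]

theorem exists_smul_le_mulVec_of_mem_spectrum [DecidableEq ι] {A : Matrix ι ι ℝ}
    (hA : ∀ i j, 0 ≤ A i j) {μ : ℂ} (hμ : μ ∈ spectrum ℂ (A.map ((↑) : ℝ → ℂ))) :
    ∃ y ∈ stdSimplex ℝ ι, ‖μ‖ • y ≤ A *ᵥ y := by
  rw [← spectrum_toLin', ← Module.End.hasEigenvalue_iff_mem_spectrum] at hμ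
  obtain ⟨z, hz⟩ := hμ.exists_hasEigenvector
  have hAz : A.map (↑) *ᵥ z = μ • z := by simpa using hz.apply_eq_smul
  obtain ⟨j, hj⟩ := Function.ne_iff.1 hz.2
  refine exists_mem_stdSimplex_smul_le_mulVec (w := fun i => ‖z i‖)
    (Pi.lt_def.2 ⟨fun i => norm_nonneg _, j, norm_pos_iff.2 hj⟩) fun i => ?_
  calc ‖μ‖ * ‖z i‖ = ‖∑ j, (A i j : ℂ) * z j‖ := by
        rw [← norm_mul, ← smul_eq_mul, ← Pi.smul_apply, ← hAz]; rfl
    _ ≤ ∑ j, ‖(A i j : ℂ) * z j‖ := norm_sum_le _ _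
    _ = (A *ᵥ fun j => ‖z j‖) i := by
        simp [mulVec, dotProduct, Complex.norm_real, abs_of_nonneg (hA _ _)]

theorem exists_eigenvector_stdSimplex_of_mem_spectrum [DecidableEq ι] {A : Matrix ι ι ℝ}
    (hA : ∀ i j, 0 ≤ A i j) {μ : ℂ} (hμ : μ ∈ spectrum ℂ (A.map ((↑) : ℝ → ℂ))) :
    ∃ ρ, ‖μ‖ ≤ ρ ∧ ∃ x ∈ stdSimplex ℝ ι, A *ᵥ x = ρ • x :=
  let ⟨_, hy, h⟩ := exists_smul_le_mulVec_of_mem_spectrum hA hμ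
  exists_eigenvector_stdSimplex_of_nonneg hA hy h

theorem pow_mulVec_eq_smul {R : Type*} [DecidableEq ι] [CommSemiring R] {A : Matrix ι ι R}
    {x : ι → R} {r : R} (h : A *ᵥ x = r • x) (t : ℕ) :
    (A ^ t) *ᵥ x = r ^ t • x := by
  induction t with
  | zero => simp
  | succ t ih => rw [pow_succ, ← mulVec_mulVec, h, mulVec_smul, ih, smul_smul, pow_succ']

end Matrix

section Simplex

variable {n : ℕ}

theorem projAct_eq_self {A : Matrix (Fin (n + 1)) (Fin (n + 1)) ℝ} {x : Fin (n + 1) → ℝ}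
    (hx : x ∈ stdSimplex ℝ (Fin (n + 1))) {r : ℝ} (hr : r ≠ 0) (h : A *ᵥ x = r • x) :
    projAct A x = x := by
  simp [projAct, h, ← Finset.mul_sum, hx.2, hr]

theorem toR_pow (E : MatZ n) (t : ℕ) : toR (E ^ t) = toR E ^ t :=
  map_pow (Int.castRingHom ℝ).mapMatrix E t

theorem mem_iInter_simg_pow {E : MatZ n} {x : Fin (n + 1) → ℝ}
    (hx : x ∈ stdSimplex ℝ (Fin (n + 1))) {r : ℝ} (hr : 0 < r) (h : toR E *ᵥ x = r • x) :
    x ∈ ⋂ t : ℕ, simg (E ^ t) :=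
  Set.mem_iInter.2 fun t => ⟨x, hx, projAct_eq_self hx (pow_pos hr t).ne' <| by
    rw [toR_pow, pow_mulVec_eq_smul h]⟩

end Simplex

theorem stmt12_general (n : ℕ) (E : MatZ n) (hE : inSigma E) (i : Fin (n + 1))
    (hfix : E *ᵥ Pi.single i 1 = Pi.single i 1)
    (hspec : ∃ μ : ℂ, μ ∈ spectrum ℂ (E.map ((↑) : ℤ → ℂ)) ∧ 1 < ‖μ‖) :
    Pi.single i (1 : ℝ) ∈ (⋂ t : ℕ, simg (E ^ t)) ∧
    (∃ v ∈ ⋂ t : ℕ, simg (E ^ t),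
      v ∈ stdSimplex ℝ (Fin (n + 1)) ∧ v ≠ Pi.single i (1 : ℝ) ∧
      ∃ ρ : ℝ, 1 < ρ ∧ toR E *ᵥ v = ρ • v) ∧
    ¬ ∃ p, (⋂ t : ℕ, simg (E ^ t)) = {p} := by
  obtain ⟨μ, hμ, hμ1⟩ := hspec
  rw [show E.map ((↑) : ℤ → ℂ) = (toR E).map (↑) by ext; simp [toR]] at hμ
  obtain ⟨ρ, hμρ, v, hv, hEv⟩ :=
    exists_eigenvector_stdSimplex_of_mem_spectrum (fun a b => Int.cast_nonneg_iff.2 (hE.2 a b)) hμ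
  have hρ : 1 < ρ := hμ1.trans_le hμρ
  have hEe : toR E *ᵥ Pi.single i 1 = (1 : ℝ) • Pi.single i 1 := by
    ext a
    simpa [toR, mulVec_single_one, Pi.single_apply, apply_ite] using congrFun hfix a
  have he := mem_iInter_simg_pow (single_mem_stdSimplex ℝ i) one_pos hEe
  have hve : v ≠ Pi.single i 1 := by
    rintro rfl
    have : ρ = 1 := by simpa using congrFun (hEv.symm.trans hEe) i
    linarith
  have hv' := mem_iInter_simg_pow hv (by linarith) hEv
  refine ⟨he, ⟨v, hv', hv, hve, ρ, hρ, hEv⟩, fun ⟨p, hp⟩ => hve ?_⟩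
  rw [hp, Set.mem_singleton_iff] at he hv'
  exact hv'.trans he.symm

theorem stmt12 (n : ℕ) (hn : 1 ≤ n) (E : MatZ n) (hE : inSigma E) (i : Fin (n + 1))
    (hfix : E *ᵥ Pi.single i 1 = Pi.single i 1)
    (hspec : ∃ μ : ℂ, μ ∈ spectrum ℂ (E.map ((↑) : ℤ → ℂ)) ∧ 1 < ‖μ‖) :
    Pi.single i (1 : ℝ) ∈ (⋂ t : ℕ, simg (E ^ t)) ∧
    (∃ v ∈ ⋂ t : ℕ, simg (E ^ t),
      v ∈ stdSimplex ℝ (Fin (n + 1)) ∧ v ≠ Pi.single i (1 : ℝ) ∧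
      ∃ ρ : ℝ, 1 < ρ ∧ toR E *ᵥ v = ρ • v) ∧
    ¬ ∃ p, (⋂ t : ℕ, simg (E ^ t)) = {p} :=
  stmt12_general n E hE i hfix hspec
end
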